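/- arXiv:math/9801145 — 3 statements merged into one kernel-verified Lean document; each statement's English description precedes it below -/
import Mathlib

section
/- Fix N ≥ 1 and let (m_n)_{n≥1} be the unique solution of system (m) with λ_n = 8^n for all n and initial data m_n(0) = 2^{-n} for n = 1, …, 2N and m_n(0) = 0 for n > 2N. Then for all n ≥ 1 and all t ≥ 0: m_{2n}(t) ≥ (1/2)·m_{2n}(0), and m_{2n+1}(t) ≤ m_{2n+1}(0)·exp(−4^{2n} t). -/
/-!
Each equation is linear in `m_n`, so `m_n(t) = m_n(0) exp (-λ_n ∫₀ᵗ m_{n+1})`. Hence `m_n ≡ 0`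
for `n > 2N`, and the bounds follow by downward induction on `n`, starting from `n = N` where
`m_{2N+1} ≡ 0`. A lower bound `m_{2n+2} ≥ 2^{-(2n+3)}` gives exponential decay of `m_{2n+1}` at
rate `8^{2n+1} 2^{-(2n+3)} = 4^{2n}`; integrating that decay, `8^{2n} ∫₀ᵗ m_{2n+1} ≤ 1/2`, so
`m_{2n}(t) ≥ e^{-1/2} m_{2n}(0) ≥ m_{2n}(0)/2`, which restarts the induction one step lower.
-/

open Set Real

section LinearODE

variable {f c : ℝ → ℝ}

theorem eq_mul_exp_integral_of_hasDerivWithinAt (hc : ContinuousOn c (Ici 0))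
    (hf : ∀ t, 0 ≤ t → HasDerivWithinAt f (c t * f t) (Ici 0) t) {t : ℝ} (ht : 0 ≤ t) :
    f t = f 0 * exp (∫ s in (0:ℝ)..t, c s) := by
  set A : ℝ → ℝ := fun s ↦ ∫ u in (0:ℝ)..s, c u
  have hcI : ∀ s, 0 ≤ s → IntervalIntegrable c MeasureTheory.volume 0 s := fun s hs ↦
    (hc.mono Icc_subset_Ici_self).intervalIntegrable_of_Icc hs
  have hA : ∀ x, 0 ≤ x → HasDerivWithinAt A (c x) (Ici x) x := fun x hx ↦
    intervalIntegral.integral_hasDerivWithinAt_right (hcI x hx)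
      ((hc.mono (Ioi_subset_Ici hx)).stronglyMeasurableAtFilter_nhdsWithin measurableSet_Ioi x)
      ((hc x hx).mono (Ioi_subset_Ici hx))
  have hderiv : ∀ x ∈ Ico 0 t, HasDerivWithinAt (fun s ↦ f s * exp (-A s)) 0 (Ici x) x := by
    intro x hx
    have hfx := (hf x hx.1).mono (Ici_subset_Ici.2 hx.1)
    exact (hfx.mul (hA x hx.1).neg.exp).congr_deriv (by simp only [Pi.neg_apply]; ring)
  have hcont : ContinuousOn (fun s ↦ f s * exp (-A s)) (Icc 0 t) := by
    refine ContinuousOn.mul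
      (fun x hx ↦ ((hf x hx.1).continuousWithinAt).mono Icc_subset_Ici_self) ?_
    refine (ContinuousOn.neg ?_).rexp
    simpa [uIcc_of_le ht] using
      intervalIntegral.continuousOn_primitive_interval' (hcI t ht) left_mem_uIcc
  have := constant_of_has_deriv_right_zero hcont hderiv t ⟨ht, le_rfl⟩
  simp only [A, intervalIntegral.integral_same, neg_zero, exp_zero, mul_one] at this
  rw [← this, mul_assoc, ← exp_add, neg_add_cancel, exp_zero, mul_one]

theorem le_mul_exp_of_hasDerivWithinAt {K : ℝ} (hc : ContinuousOn c (Ici 0))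
    (hf : ∀ t, 0 ≤ t → HasDerivWithinAt f (c t * f t) (Ici 0) t) (hf0 : 0 ≤ f 0)
    (hcK : ∀ s, 0 ≤ s → c s ≤ -K) {t : ℝ} (ht : 0 ≤ t) :
    f t ≤ f 0 * exp (-K * t) := by
  rw [eq_mul_exp_integral_of_hasDerivWithinAt hc hf ht]
  gcongr
  calc ∫ s in (0:ℝ)..t, c s ≤ ∫ _ in (0:ℝ)..t, -K :=
        intervalIntegral.integral_mono_on ht
          ((hc.mono Icc_subset_Ici_self).intervalIntegrable_of_Icc ht) intervalIntegrable_const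
          fun s hs ↦ hcK s hs.1
    _ = -K * t := by simp [mul_comm]

theorem mul_exp_neg_le_of_hasDerivWithinAt {B K : ℝ} (hc : ContinuousOn c (Ici 0))
    (hf : ∀ t, 0 ≤ t → HasDerivWithinAt f (c t * f t) (Ici 0) t) (hf0 : 0 ≤ f 0) (hB : 0 ≤ B)
    (hcB : ∀ s, 0 ≤ s → -(B * K * exp (-K * s)) ≤ c s) {t : ℝ} (ht : 0 ≤ t) :
    f 0 * exp (-B) ≤ f t := by
  rw [eq_mul_exp_integral_of_hasDerivWithinAt hc hf ht]
  gcongr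
  have hprim : ∀ s ∈ uIcc 0 t,
      HasDerivAt (fun s ↦ B * exp (-K * s)) (-(B * K * exp (-K * s))) s := fun s _ ↦
    ((((hasDerivAt_id s).const_mul (-K)).exp).const_mul B).congr_deriv (by simp only [id]; ring)
  calc -B ≤ B * exp (-K * t) - B * exp (-K * 0) := by simp; positivity
    _ = ∫ s in (0:ℝ)..t, -(B * K * exp (-K * s)) :=
        (intervalIntegral.integral_eq_sub_of_hasDerivAt hprim
          ((by fun_prop : Continuous _).intervalIntegrable 0 t)).symm
    _ ≤ ∫ s in (0:ℝ)..t, c s :=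
        intervalIntegral.integral_mono_on ht ((by fun_prop : Continuous _).intervalIntegrable 0 t)
          ((hc.mono Icc_subset_Ici_self).intervalIntegrable_of_Icc ht) fun s hs ↦ hcB s hs.1

end LinearODE

theorem eight_pow_mul_half_pow (n : ℕ) :
    (8 : ℝ) ^ (2 * n + 1) * (1 / 2 * (1 / 2) ^ (2 * n + 2)) = 4 ^ (2 * n) := by
  rw [show (8 : ℝ) = 2 ^ 3 by norm_num, show (4 : ℝ) = 2 ^ 2 by norm_num, ← pow_mul, ← pow_mul,
    one_div_pow]
  field_simp
  ring

theorem eight_pow_mul_half_pow_div_four_pow (n : ℕ) :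
    (8 : ℝ) ^ (2 * n) * (1 / 2) ^ (2 * n + 1) / 4 ^ (2 * n) = 1 / 2 := by
  rw [show (8 : ℝ) = 2 ^ 3 by norm_num, show (4 : ℝ) = 2 ^ 2 by norm_num, ← pow_mul, ← pow_mul,
    one_div_pow]
  field_simp
  ring

/-- System (m) on `[0, ∞)`, with rates `κ n` in place of the paper's `λ_n`. -/
def SolvesSystemM (κ : ℕ → ℝ) (m : ℕ → ℝ → ℝ) : Prop :=
  ∀ n, 1 ≤ n → ∀ t, 0 ≤ t → HasDerivWithinAt (m n) (-κ n * m n t * m (n + 1) t) (Ici 0) t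

namespace SolvesSystemM

variable {κ : ℕ → ℝ} {m : ℕ → ℝ → ℝ} {k n : ℕ} {t : ℝ}

theorem continuousOn_rate (h : SolvesSystemM κ m) (k : ℕ) :
    ContinuousOn (fun s ↦ -κ k * m (k + 1) s) (Ici 0) :=
  continuousOn_const.mul fun s hs ↦ (h (k + 1) k.succ_pos s hs).continuousWithinAt

theorem hasDerivWithinAt_linear (h : SolvesSystemM κ m) (hk : 1 ≤ k) (ht : 0 ≤ t) :
    HasDerivWithinAt (m k) (-κ k * m (k + 1) t * m k t) (Ici 0) t :=
  (h k hk t ht).congr_deriv (by ring)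

theorem eq_zero_of_initial_eq_zero (h : SolvesSystemM κ m) (hk : 1 ≤ k) (h0 : m k 0 = 0)
    (ht : 0 ≤ t) : m k t = 0 := by
  rw [eq_mul_exp_integral_of_hasDerivWithinAt (h.continuousOn_rate k)
    (fun _ ↦ h.hasDerivWithinAt_linear hk) ht, h0, zero_mul]

theorem le_mul_exp_of_le {a : ℝ} (h : SolvesSystemM κ m) (hk : 1 ≤ k) (hκ : 0 ≤ κ k)
    (h0 : 0 ≤ m k 0) (hlow : ∀ s, 0 ≤ s → a ≤ m (k + 1) s) (ht : 0 ≤ t) :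
    m k t ≤ m k 0 * exp (-(κ k * a) * t) :=
  le_mul_exp_of_hasDerivWithinAt (h.continuousOn_rate k) (fun _ ↦ h.hasDerivWithinAt_linear hk)
    h0 (fun s hs ↦ by nlinarith [hlow s hs]) ht

theorem mul_exp_neg_le_of_le {b K : ℝ} (h : SolvesSystemM κ m) (hk : 1 ≤ k) (hκ : 0 ≤ κ k)
    (h0 : 0 ≤ m k 0) (hb : 0 ≤ b) (hK : 0 < K)
    (hup : ∀ s, 0 ≤ s → m (k + 1) s ≤ b * exp (-K * s)) (ht : 0 ≤ t) :
    m k 0 * exp (-(κ k * b / K)) ≤ m k t := by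
  refine mul_exp_neg_le_of_hasDerivWithinAt (K := K) (h.continuousOn_rate k)
    (fun _ ↦ h.hasDerivWithinAt_linear hk) h0 (by positivity) (fun s hs ↦ ?_) ht
  rw [div_mul_cancel₀ _ hK.ne']
  linarith [mul_le_mul_of_nonneg_left (hup s hs) hκ]

theorem odd_le_of_even_ge (h : SolvesSystemM (fun n ↦ (8 : ℝ) ^ n) m)
    (h0 : 0 ≤ m (2 * n + 1) 0)
    (heven : ∀ s, 0 ≤ s → 1 / 2 * (1 / 2) ^ (2 * n + 2) ≤ m (2 * n + 2) s) (ht : 0 ≤ t) :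
    m (2 * n + 1) t ≤ m (2 * n + 1) 0 * exp (-(4 : ℝ) ^ (2 * n) * t) := by
  simpa only [eight_pow_mul_half_pow] using
    h.le_mul_exp_of_le (by omega) (by positivity) h0 heven ht

theorem even_ge_of_odd_le (h : SolvesSystemM (fun n ↦ (8 : ℝ) ^ n) m) (hn : 1 ≤ n)
    (h0 : 0 ≤ m (2 * n) 0) (h1 : m (2 * n + 1) 0 ≤ (1 / 2) ^ (2 * n + 1))
    (hodd : ∀ s, 0 ≤ s → m (2 * n + 1) s ≤ m (2 * n + 1) 0 * exp (-(4 : ℝ) ^ (2 * n) * s))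
    (ht : 0 ≤ t) :
    1 / 2 * m (2 * n) 0 ≤ m (2 * n) t := by
  have hup (s : ℝ) (hs : 0 ≤ s) :
      m (2 * n + 1) s ≤ (1 / 2) ^ (2 * n + 1) * exp (-(4 : ℝ) ^ (2 * n) * s) :=
    (hodd s hs).trans (mul_le_mul_of_nonneg_right h1 (exp_pos _).le)
  have hlow := h.mul_exp_neg_le_of_le (by omega) (by positivity) h0 (by positivity)
    (by positivity) hup ht
  rw [eight_pow_mul_half_pow_div_four_pow] at hlow
  calc 1 / 2 * m (2 * n) 0 ≤ m (2 * n) 0 * exp (-(1 / 2)) := by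
        rw [mul_comm]
        exact mul_le_mul_of_nonneg_left (by linarith [add_one_le_exp (-(1 / 2 : ℝ))]) h0
    _ ≤ m (2 * n) t := hlow

end SolvesSystemM

theorem system_m_truncated_bounds_general (N : ℕ) (m : ℕ → ℝ → ℝ)
    (hode : ∀ n : ℕ, 1 ≤ n → ∀ t : ℝ, 0 ≤ t →
      HasDerivWithinAt (m n) (-((8:ℝ) ^ n) * m n t * m (n + 1) t) (Set.Ici (0:ℝ)) t)
    (hinit : ∀ n : ℕ, 1 ≤ n → n ≤ 2 * N → m n 0 = (1/2 : ℝ) ^ n)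
    (hinit' : ∀ n : ℕ, 2 * N < n → m n 0 = 0) :
    ∀ n : ℕ, 1 ≤ n → ∀ t : ℝ, 0 ≤ t →
      (1/2 : ℝ) * m (2 * n) 0 ≤ m (2 * n) t ∧
      m (2 * n + 1) t ≤ m (2 * n + 1) 0 * Real.exp (-(4:ℝ) ^ (2 * n) * t) := by
  have hsol : SolvesSystemM (fun n ↦ (8 : ℝ) ^ n) m := hode
  have init_bounds (k : ℕ) (hk : 1 ≤ k) : 0 ≤ m k 0 ∧ m k 0 ≤ (1 / 2) ^ k := by
    rcases le_or_gt k (2 * N) with hkN | hkN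
    · rw [hinit k hk hkN]
      exact ⟨by positivity, le_rfl⟩
    · rw [hinit' k hkN]
      exact ⟨le_rfl, by positivity⟩
  have odd_of_le (n : ℕ) (hn : N ≤ n) (t : ℝ) (ht : 0 ≤ t) :
      m (2 * n + 1) t ≤ m (2 * n + 1) 0 * exp (-(4 : ℝ) ^ (2 * n) * t) := by
    rw [hsol.eq_zero_of_initial_eq_zero (by omega) (hinit' _ (by omega)) ht, hinit' _ (by omega),
      zero_mul]
  have odd (n : ℕ) : ∀ t, 0 ≤ t →
      m (2 * n + 1) t ≤ m (2 * n + 1) 0 * exp (-(4 : ℝ) ^ (2 * n) * t) := by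
    rcases le_or_gt N n with hNn | hnN
    · exact odd_of_le n hNn
    replace hnN := hnN.le
    induction hnN using Nat.decreasingInduction with
    | self => exact odd_of_le N le_rfl
    | of_succ k hk ih =>
      refine fun t ht ↦ hsol.odd_le_of_even_ge (init_bounds _ (by omega)).1 (fun s hs ↦ ?_) ht
      have := hsol.even_ge_of_odd_le (n := k + 1) (by omega) (init_bounds _ (by omega)).1
        (init_bounds _ (by omega)).2 ih hs
      rwa [hinit (2 * (k + 1)) (by omega) (by omega)] at this
  intro n hn t ht
  exact ⟨hsol.even_ge_of_odd_le hn (init_bounds _ (by omega)).1 (init_bounds _ (by omega)).2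
    (odd n) ht, odd n t ht⟩

/-- Proposition 3.1: let `(m_n)` solve system (m) with `λ_n = 8^n`,
`m_n(0) = 2^{-n}` for `1 ≤ n ≤ 2N` and `m_n(0) = 0` for `n > 2N`.  Then for all `n ≥ 1`
and `t ≥ 0`: `m_{2n}(t) ≥ ½ m_{2n}(0)` and `m_{2n+1}(t) ≤ m_{2n+1}(0)·exp(−4^{2n} t)`. -/
theorem system_m_truncated_bounds (N : ℕ) (hN : 1 ≤ N) (m : ℕ → ℝ → ℝ)
    (hode : ∀ n : ℕ, 1 ≤ n → ∀ t : ℝ, 0 ≤ t →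
      HasDerivWithinAt (m n) (-((8:ℝ) ^ n) * m n t * m (n + 1) t) (Set.Ici (0:ℝ)) t)
    (hinit : ∀ n : ℕ, 1 ≤ n → n ≤ 2 * N → m n 0 = (1/2 : ℝ) ^ n)
    (hinit' : ∀ n : ℕ, 2 * N < n → m n 0 = 0) :
    ∀ n : ℕ, 1 ≤ n → ∀ t : ℝ, 0 ≤ t →
      (1/2 : ℝ) * m (2 * n) 0 ≤ m (2 * n) t ∧
      m (2 * n + 1) t ≤ m (2 * n + 1) 0 * Real.exp (-(4:ℝ) ^ (2 * n) * t) :=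
  system_m_truncated_bounds_general N m hode hinit hinit'
end

section
/- For N ≥ 1, let m^{2N} = (m^{2N}_n)_{n≥1} denote the unique solution of system (m) with λ_n = 8^n and initial data m_n(0) = 2^{-n} for n ≤ 2N, m_n(0) = 0 for n > 2N. Then for all n ≤ N ≤ N' and all t ≥ 0: m^{2N'}_{2n}(t) ≤ m^{2N}_{2n}(t) and m^{2N}_{2n+1}(t) ≤ m^{2N'}_{2n+1}(t); that is, for N ≥ n, m^{2N}_{2n}(t) is non-increasing in N and m^{2N}_{2n+1}(t) is non-decreasing in N. -/
/-!
With `K = 2N`, the differences `w k = m' k - m k` solve the linear equations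
`w k' = -λ k m' (k+1) w k - λ k m k w (k+1)` and vanish at `t = 0` for `k ≤ K`.
At the top, `m (K+1) ≡ 0 ≤ m' (K+1)`, so `w (K+1) ≥ 0`. A linear equation with nonnegative
forcing preserves nonnegativity (integrating factor), and since `λ k m k ≥ 0` the forcing term
of `(-1)^(K+1-k) w k` is a nonnegative multiple of `(-1)^(K-k) w (k+1)`; descending induction
on `k` gives `(-1)^(K+1-k) w k ≥ 0` for all `1 ≤ k ≤ K+1`.
-/

open Set

theorem nonneg_of_hasDerivWithinAt_linear {a f w : ℝ → ℝ} (ha : ContinuousOn a (Ici 0))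
    (hw : ∀ t, 0 ≤ t → HasDerivWithinAt w (a t * w t + f t) (Ici 0) t)
    (hf : ∀ t, 0 ≤ t → 0 ≤ f t) (h0 : 0 ≤ w 0) {t : ℝ} (ht : 0 ≤ t) : 0 ≤ w t := by
  set A : ℝ → ℝ := fun t => ∫ s in (0:ℝ)..t, a (max s 0) with hA
  have hA_deriv : ∀ t, 0 ≤ t → HasDerivAt A (a t) t := by
    intro t ht
    have ha' : Continuous fun s => a (max s 0) :=
      ha.comp_continuous (continuous_id.max continuous_const) fun s => le_max_right s 0
    simpa [max_eq_left ht] using (ha'.integral_hasStrictDerivAt 0 t).hasDerivAt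
  set g : ℝ → ℝ := fun t => Real.exp (-A t) * w t
  have hg : ∀ t, 0 ≤ t → HasDerivWithinAt g (Real.exp (-A t) * f t) (Ici 0) t := by
    intro t ht
    have hexp := ((hA_deriv t ht).neg.exp).hasDerivWithinAt (s := Ici 0)
    exact (hexp.mul (hw t ht)).congr_deriv (by rw [Pi.neg_apply]; ring)
  have hg_mono : MonotoneOn g (Ici 0) := by
    refine monotoneOn_of_hasDerivWithinAt_nonneg (f' := fun t => Real.exp (-A t) * f t)
      (convex_Ici 0) (fun t ht => (hg t ht).continuousWithinAt)
      (fun t ht => ?_) (fun t ht => ?_)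
    · rw [interior_Ici] at ht ⊢
      exact (hg t (le_of_lt ht)).mono (Ioi_subset_Ici_self)
    · rw [interior_Ici] at ht
      exact mul_nonneg (Real.exp_nonneg _) (hf t (le_of_lt ht))
  have hgt : 0 ≤ g t := by
    calc 0 ≤ g 0 := by simpa [g, hA] using h0
      _ ≤ g t := hg_mono self_mem_Ici ht ht
  exact (mul_nonneg_iff_of_pos_left (Real.exp_pos _)).mp hgt

def IsSystemMSolution (lam : ℕ → ℝ) (m : ℕ → ℝ → ℝ) : Prop :=
  ∀ n, 1 ≤ n → ∀ t, 0 ≤ t →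
    HasDerivWithinAt (m n) (-lam n * m n t * m (n + 1) t) (Ici 0) t

namespace IsSystemMSolution

variable {lam : ℕ → ℝ} {m m' : ℕ → ℝ → ℝ} {n : ℕ} {t : ℝ}

theorem continuousOn (hm : IsSystemMSolution lam m) (hn : 1 ≤ n) : ContinuousOn (m n) (Ici 0) :=
  fun t ht => (hm n hn t ht).continuousWithinAt

theorem nonneg (hm : IsSystemMSolution lam m) (hn : 1 ≤ n) (h0 : 0 ≤ m n 0) (ht : 0 ≤ t) :
    0 ≤ m n t :=
  nonneg_of_hasDerivWithinAt_linear (a := fun s => -lam n * m (n + 1) s) (f := 0)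
    (continuousOn_const.mul (hm.continuousOn (by omega)))
    (fun s hs => (hm n hn s hs).congr_deriv (by simp only [Pi.zero_apply]; ring))
    (fun _ _ => le_rfl) h0 ht

theorem nonpos (hm : IsSystemMSolution lam m) (hn : 1 ≤ n) (h0 : m n 0 ≤ 0) (ht : 0 ≤ t) :
    m n t ≤ 0 :=
  neg_nonneg.mp <| nonneg_of_hasDerivWithinAt_linear
    (a := fun s => -lam n * m (n + 1) s) (f := 0)
    (continuousOn_const.mul (hm.continuousOn (by omega)))
    (fun s hs => (hm n hn s hs).neg.congr_deriv
      (by simp only [Pi.neg_apply, Pi.zero_apply]; ring))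
    (fun _ _ => le_rfl) (neg_nonneg.mpr h0) ht

theorem alternating_sign_sub (hlam : ∀ n, 0 ≤ lam n) (hm : IsSystemMSolution lam m)
    (hm' : IsSystemMSolution lam m') {K : ℕ} (heq : ∀ k, 1 ≤ k → k ≤ K → m' k 0 = m k 0)
    (hnonneg : ∀ k, 1 ≤ k → k ≤ K → 0 ≤ m k 0) (htop : m (K + 1) 0 = 0)
    (htop' : 0 ≤ m' (K + 1) 0) {k : ℕ} (hk : 1 ≤ k) (hkK : k ≤ K + 1) (ht : 0 ≤ t) :
    0 ≤ (-1) ^ (K + 1 - k) * (m' k t - m k t) := by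
  induction hkK using Nat.decreasingInduction generalizing t with
  | self =>
    have := hm.nonpos (by omega) htop.le ht
    have := hm'.nonneg (by omega) htop' ht
    simp only [Nat.sub_self, pow_zero, one_mul]
    linarith
  | of_succ k hkK ih =>
    have hsign : (-1 : ℝ) ^ (K + 1 - k) = -(-1) ^ (K + 1 - (k + 1)) := by
      rw [show K + 1 - k = K + 1 - (k + 1) + 1 by omega, pow_succ]; ring
    refine nonneg_of_hasDerivWithinAt_linear (w := fun s => (-1) ^ (K + 1 - k) * (m' k s - m k s))
      (a := fun s => -lam k * m' (k + 1) s)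
      (f := fun s => lam k * m k s * ((-1) ^ (K + 1 - (k + 1)) * (m' (k + 1) s - m (k + 1) s)))
      (continuousOn_const.mul (hm'.continuousOn (by omega))) (fun s hs => ?_) (fun s hs => ?_)
      (by rw [heq k hk (by omega), sub_self, mul_zero]) ht
    · refine (((hm' k hk s hs).sub (hm k hk s hs)).const_mul _).congr_deriv ?_
      rw [hsign]; ring
    · exact mul_nonneg (mul_nonneg (hlam k) (hm.nonneg hk (hnonneg k hk (by omega)) hs))
        (ih (by omega) hs)

end IsSystemMSolution

theorem system_m_monotone_in_truncation_general (N N' : ℕ) (hNN' : N ≤ N')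
    (m m' : ℕ → ℝ → ℝ)
    (hode : ∀ n : ℕ, 1 ≤ n → ∀ t : ℝ, 0 ≤ t →
      HasDerivWithinAt (m n) (-((8:ℝ) ^ n) * m n t * m (n + 1) t) (Set.Ici (0:ℝ)) t)
    (hinit : ∀ n : ℕ, 1 ≤ n → n ≤ 2 * N → m n 0 = (1/2 : ℝ) ^ n)
    (hinit2 : ∀ n : ℕ, 2 * N < n → m n 0 = 0)
    (hode' : ∀ n : ℕ, 1 ≤ n → ∀ t : ℝ, 0 ≤ t →
      HasDerivWithinAt (m' n) (-((8:ℝ) ^ n) * m' n t * m' (n + 1) t) (Set.Ici (0:ℝ)) t)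
    (hinit' : ∀ n : ℕ, 1 ≤ n → n ≤ 2 * N' → m' n 0 = (1/2 : ℝ) ^ n)
    (hinit2' : ∀ n : ℕ, 2 * N' < n → m' n 0 = 0) :
    ∀ n : ℕ, 1 ≤ n → n ≤ N → ∀ t : ℝ, 0 ≤ t →
      m' (2 * n) t ≤ m (2 * n) t ∧ m (2 * n + 1) t ≤ m' (2 * n + 1) t := by
  have htop' : 0 ≤ m' (2 * N + 1) 0 := by
    rcases le_or_gt (2 * N + 1) (2 * N') with h | h
    · rw [hinit' _ (by omega) h]; positivity
    · rw [hinit2' _ h]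
  have hsign : ∀ k, 1 ≤ k → k ≤ 2 * N + 1 → ∀ t : ℝ, 0 ≤ t →
      0 ≤ (-1) ^ (2 * N + 1 - k) * (m' k t - m k t) := fun k hk hkN t ht =>
    IsSystemMSolution.alternating_sign_sub (lam := fun n => (8 : ℝ) ^ n) (fun n => by positivity)
      hode hode'
      (fun k hk hkN => by rw [hinit k hk hkN, hinit' k hk (by omega)])
      (fun k hk hkN => by rw [hinit k hk hkN]; positivity) (hinit2 _ (by omega)) htop' hk hkN ht
  intro n hn hnN t ht
  have heven := hsign (2 * n) (by omega) (by omega) t ht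
  have hodd := hsign (2 * n + 1) (by omega) (by omega) t ht
  rw [show 2 * N + 1 - 2 * n = 2 * (N - n) + 1 by omega, (odd_two_mul_add_one _).neg_one_pow]
    at heven
  rw [show 2 * N + 1 - (2 * n + 1) = 2 * (N - n) by omega, (even_two_mul _).neg_one_pow] at hodd
  constructor <;> linarith

/-- let `m = m^{2N}` and `m' = m^{2N'}` solve system (m) with `λ_n = 8^n`
and initial data `m_n(0) = 2^{-n}` for `n ≤ 2N` (resp. `n ≤ 2N'`), `m_n(0) = 0` above.
Then for `1 ≤ n ≤ N ≤ N'` and `t ≥ 0`: `m^{2N'}_{2n}(t) ≤ m^{2N}_{2n}(t)` and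
`m^{2N}_{2n+1}(t) ≤ m^{2N'}_{2n+1}(t)`. -/
theorem system_m_monotone_in_truncation (N N' : ℕ) (hN : 1 ≤ N) (hNN' : N ≤ N')
    (m m' : ℕ → ℝ → ℝ)
    (hode : ∀ n : ℕ, 1 ≤ n → ∀ t : ℝ, 0 ≤ t →
      HasDerivWithinAt (m n) (-((8:ℝ) ^ n) * m n t * m (n + 1) t) (Set.Ici (0:ℝ)) t)
    (hinit : ∀ n : ℕ, 1 ≤ n → n ≤ 2 * N → m n 0 = (1/2 : ℝ) ^ n)
    (hinit2 : ∀ n : ℕ, 2 * N < n → m n 0 = 0)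
    (hode' : ∀ n : ℕ, 1 ≤ n → ∀ t : ℝ, 0 ≤ t →
      HasDerivWithinAt (m' n) (-((8:ℝ) ^ n) * m' n t * m' (n + 1) t) (Set.Ici (0:ℝ)) t)
    (hinit' : ∀ n : ℕ, 1 ≤ n → n ≤ 2 * N' → m' n 0 = (1/2 : ℝ) ^ n)
    (hinit2' : ∀ n : ℕ, 2 * N' < n → m' n 0 = 0) :
    ∀ n : ℕ, 1 ≤ n → n ≤ N → ∀ t : ℝ, 0 ≤ t →
      m' (2 * n) t ≤ m (2 * n) t ∧ m (2 * n + 1) t ≤ m' (2 * n + 1) t :=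
  system_m_monotone_in_truncation_general N N' hNN' m m' hode hinit hinit2 hode' hinit' hinit2'
end

section
/- There exist two solutions m^+ = (m^+_n)_{n≥1} and m^- = (m^-_n)_{n≥1} of system (m) with λ_n = 8^n, each consisting of nonnegative differentiable functions on [0,∞), such that m^+_n(0) = m^-_n(0) = 2^{-n} for all n ≥ 1, and such that for all n ≥ 1 and t ≥ 0: m^+_{2n}(t) ≥ (1/2)·2^{-2n} while m^-_{2n}(t) ≤ 2^{-2n}·exp(−4^{2n−1} t). In particular m^+ ≠ m^-, so the system (m) with this initial data has at least two distinct solutions. -/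
/-!
Look for self-similar solutions `m_n(t) = 2^{-n} ψ(4^n t / 8)` (`n` even),
`m_n(t) = 2^{-n} φ(4^n t / 2)` (`n` odd). System (m) then collapses to
`φ' = -ψ φ`, `ψ'(s) = -4 φ(16 s) ψ(s)`, `φ 0 = ψ 0 = 1`, i.e.
`φ = exp (-∫₀ˢ ψ)` and `ψ = exp (-4 ∫₀ˢ φ(16 u) du)`. Eliminating either unknown gives a map that
sends continuous functions with values in `[3/5, 1]` to themselves (`3/5 ≤ exp (-5/12)`) and
contracts with constant `25/36`, because a lower bound on one unknown makes the other decay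
exponentially. Its two fixed points give two solutions with the same data: in one `ψ ≥ 3/5`, so
the even components stay comparable to `2^{-2n}`; in the other `φ ≥ 3/5`, which forces
`ψ(s) ≤ exp (-12 s / 5)` and hence exponential decay of the even components.
-/

open Set Real intervalIntegral

namespace SystemM

lemma hasDerivAt_exp_neg_mul (k u : ℝ) :
    HasDerivAt (fun u => exp (-(k * u))) (exp (-(k * u)) * -k) u := by
  simpa using (((hasDerivAt_id u).const_mul k).fun_neg).exp

lemma integral_exp_neg_mul_le {k : ℝ} (hk : 0 < k) (T : ℝ) :
    ∫ u in (0:ℝ)..T, exp (-(k * u)) ≤ 1 / k := by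
  have hderiv : ∀ u ∈ uIcc 0 T,
      HasDerivAt (fun u => -exp (-(k * u)) / k) (exp (-(k * u))) u := fun u _ =>
    ((hasDerivAt_exp_neg_mul k u).neg.div_const k).congr_deriv (by field_simp)
  rw [integral_eq_sub_of_hasDerivAt hderiv (Continuous.intervalIntegrable (by fun_prop) _ _)]
  calc _ = 1 / k - exp (-(k * T)) / k := by simp only [mul_zero, neg_zero, exp_zero]; ring
    _ ≤ 1 / k := sub_le_self _ (by positivity)

lemma integral_mul_exp_neg_mul_le {k T : ℝ} (hk : 0 < k) (hT : 0 ≤ T) :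
    ∫ u in (0:ℝ)..T, u * exp (-(k * u)) ≤ 1 / k ^ 2 := by
  have hderiv : ∀ u ∈ uIcc 0 T, HasDerivAt (fun u => -(k * u + 1) * exp (-(k * u)) / k ^ 2)
      (u * exp (-(k * u))) u := fun u _ => by
    have hlin : HasDerivAt (fun u => -(k * u + 1)) (-k) u := by
      simpa only [mul_one] using (((hasDerivAt_id' u).const_mul k).add_const 1).fun_neg
    exact ((hlin.mul (hasDerivAt_exp_neg_mul k u)).div_const (k ^ 2)).congr_deriv
      (by field_simp; ring)
  rw [integral_eq_sub_of_hasDerivAt hderiv (Continuous.intervalIntegrable (by fun_prop) _ _)]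
  calc _ = 1 / k ^ 2 - (k * T + 1) * exp (-(k * T)) / k ^ 2 := by
        simp only [mul_zero, zero_add, neg_zero, exp_zero]; ring
    _ ≤ 1 / k ^ 2 := sub_le_self _ (by positivity)

lemma abs_exp_neg_sub_exp_neg_le {x y m : ℝ} (hx : m ≤ x) (hy : m ≤ y) :
    |exp (-x) - exp (-y)| ≤ exp (-m) * |x - y| := by
  wlog hxy : y ≤ x generalizing x y
  · rw [abs_sub_comm, abs_sub_comm x]
    exact this hy hx (le_of_not_ge hxy)
  have hexp : exp (-x) - exp (-y) = exp (-y) * (exp (-(x - y)) - 1) := by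
    rw [mul_sub, ← exp_add]; ring_nf
  have hlin : 1 - (x - y) ≤ exp (-(x - y)) := by linarith [add_one_le_exp (-(x - y))]
  have hle_one : exp (-(x - y)) ≤ 1 := exp_le_one_iff.2 (by linarith)
  have hmono : exp (-y) ≤ exp (-m) := exp_le_exp.2 (by linarith)
  rw [hexp, abs_mul, abs_of_pos (exp_pos _), abs_of_nonpos (by linarith),
    abs_of_nonneg (by linarith)]
  exact mul_le_mul hmono (by linarith) (by linarith) (exp_pos _).le

/-- Solves `y' = -c f(a s) y`, `y 0 = 1` on `[0, ∞)`; the extension by `1` to `s < 0` keeps it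
bounded and continuous on all of `ℝ`. -/
noncomputable def decay (c a : ℝ) (f : ℝ → ℝ) (s : ℝ) : ℝ :=
  exp (-(c * ∫ u in (0:ℝ)..max s 0, f (a * u)))

section decay

variable {c a b s : ℝ} {f g : ℝ → ℝ}

lemma decay_zero (c a : ℝ) (f : ℝ → ℝ) : decay c a f 0 = 1 := by
  simp [decay]

lemma decay_pos (c a : ℝ) (f : ℝ → ℝ) (s : ℝ) : 0 < decay c a f s :=
  exp_pos _

lemma decay_max_zero (c a : ℝ) (f : ℝ → ℝ) (s : ℝ) : decay c a f (max s 0) = decay c a f s := by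
  simp [decay]

lemma decay_of_nonneg (hs : 0 ≤ s) : decay c a f s = exp (-(c * ∫ u in (0:ℝ)..s, f (a * u))) := by
  rw [decay, max_eq_left hs]

lemma continuous_decay (hf : Continuous f) (c a : ℝ) : Continuous (decay c a f) := by
  have hint : ∀ x y, IntervalIntegrable (fun u => f (a * u)) MeasureTheory.volume x y :=
    fun x y => (hf.comp (continuous_const_mul a)).intervalIntegrable x y
  exact continuous_exp.comp (continuous_const.mul
    ((continuous_primitive hint 0).comp (continuous_id.max continuous_const))).neg

lemma hasDerivWithinAt_decay (hf : Continuous f) (c a : ℝ) (hs : 0 ≤ s) :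
    HasDerivWithinAt (decay c a f) (-(c * f (a * s)) * decay c a f s) (Ici 0) s := by
  have hprim : HasDerivAt (fun t => ∫ u in (0:ℝ)..t, f (a * u)) (f (a * s)) s :=
    ((hf.comp (continuous_const_mul a)).integral_hasStrictDerivAt 0 s).hasDerivAt
  have hexp := ((hasDerivAt_exp _).comp s (hprim.const_mul c).neg).hasDerivWithinAt (s := Ici 0)
  rw [decay_of_nonneg hs]
  exact (hexp.congr (fun t ht => decay_of_nonneg ht) (decay_of_nonneg hs)).congr_deriv
    (by simp only [Pi.neg_apply]; ring)

lemma decay_le_one (hf : ∀ u, 0 ≤ f u) (hc : 0 ≤ c) (a s : ℝ) : decay c a f s ≤ 1 := by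
  refine exp_le_one_iff.2 (neg_nonpos.2 (mul_nonneg hc ?_))
  exact integral_nonneg (le_max_right s 0) fun u _ => hf _

lemma mul_le_integral_comp_mul (hf : Continuous f) (hfb : ∀ u, b ≤ f u) (a : ℝ) (hs : 0 ≤ s) :
    b * s ≤ ∫ u in (0:ℝ)..s, f (a * u) := by
  have hint : ∫ _ in (0:ℝ)..s, b ≤ ∫ u in (0:ℝ)..s, f (a * u) :=
    integral_mono_on hs intervalIntegrable_const
      ((hf.comp (continuous_const_mul a)).intervalIntegrable _ _) fun u _ => hfb (a * u)
  rwa [integral_const, sub_zero, smul_eq_mul, mul_comm] at hint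

lemma decay_le_exp (hf : Continuous f) (hfb : ∀ u, b ≤ f u) (hc : 0 ≤ c) (a : ℝ) (hs : 0 ≤ s) :
    decay c a f s ≤ exp (-(c * b * s)) := by
  rw [decay_of_nonneg hs, exp_le_exp, mul_assoc]
  exact neg_le_neg (mul_le_mul_of_nonneg_left (mul_le_integral_comp_mul hf hfb a hs) hc)

lemma exp_neg_le_decay (hf : Continuous f) {κ : ℝ} (hκ : 0 < κ) (ha : 0 < a) (hc : 0 ≤ c)
    (hdecay : ∀ u, 0 ≤ u → f u ≤ exp (-(κ * u))) (s : ℝ) :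
    exp (-(c / (κ * a))) ≤ decay c a f s := by
  have hint : ∫ u in (0:ℝ)..max s 0, f (a * u) ≤ ∫ u in (0:ℝ)..max s 0, exp (-(κ * a * u)) :=
    integral_mono_on (le_max_right s 0) ((hf.comp (continuous_const_mul a)).intervalIntegrable _ _)
      (Continuous.intervalIntegrable (by fun_prop) _ _) fun u hu => by
        simpa only [mul_assoc] using hdecay (a * u) (mul_nonneg ha.le hu.1)
  rw [decay, exp_le_exp, neg_le_neg_iff, div_eq_mul_one_div]
  exact mul_le_mul_of_nonneg_left (hint.trans (integral_exp_neg_mul_le (mul_pos hκ ha) _)) hc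

lemma abs_decay_sub_decay_le_integral (hf : Continuous f) (hg : Continuous g) (hc : 0 ≤ c)
    (hfb : ∀ u, b ≤ f u) (hgb : ∀ u, b ≤ g u) (hs : 0 ≤ s) :
    |decay c a f s - decay c a g s| ≤
      exp (-(c * b * s)) * (c * ∫ u in (0:ℝ)..s, |f (a * u) - g (a * u)|) := by
  have hfa : Continuous fun u => f (a * u) := hf.comp (continuous_const_mul a)
  have hga : Continuous fun u => g (a * u) := hg.comp (continuous_const_mul a)
  have hlower (h : ℝ → ℝ) (hh : Continuous h) (hhb : ∀ u, b ≤ h u) :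
      c * b * s ≤ c * ∫ u in (0:ℝ)..s, h (a * u) := by
    rw [mul_assoc]; exact mul_le_mul_of_nonneg_left (mul_le_integral_comp_mul hh hhb a hs) hc
  rw [decay_of_nonneg hs, decay_of_nonneg hs]
  refine (abs_exp_neg_sub_exp_neg_le (hlower f hf hfb) (hlower g hg hgb)).trans ?_
  rw [← mul_sub, abs_mul, abs_of_nonneg hc,
    ← integral_sub (hfa.intervalIntegrable _ _) (hga.intervalIntegrable _ _)]
  gcongr
  exact abs_integral_le_integral_abs hs

lemma abs_decay_decay_sub_le {c₁ a₁ c₂ a₂ D : ℝ} (hf : Continuous f) (hg : Continuous g)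
    (hc₁ : 0 ≤ c₁) (ha₁ : 0 < a₁) (hc₂ : 0 < c₂) (hb : 0 < b) (hfb : ∀ u, b ≤ f u)
    (hgb : ∀ u, b ≤ g u) (hfg : ∀ u, |f u - g u| ≤ D) (s : ℝ) :
    |decay c₁ a₁ (decay c₂ a₂ f) s - decay c₁ a₁ (decay c₂ a₂ g) s| ≤
      c₁ / (c₂ * b ^ 2 * a₁) * D := by
  have hD : 0 ≤ D := (abs_nonneg _).trans (hfg 0)
  have hF := continuous_decay hf c₂ a₂
  have hG := continuous_decay hg c₂ a₂
  have hinner : ∀ u ∈ Icc 0 (max s 0), |decay c₂ a₂ f (a₁ * u) - decay c₂ a₂ g (a₁ * u)| ≤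
      c₂ * a₁ * D * (u * exp (-(c₂ * b * a₁ * u))) := fun u hu => by
    have hau : 0 ≤ a₁ * u := mul_nonneg ha₁.le hu.1
    calc _ ≤ exp (-(c₂ * b * (a₁ * u))) *
          (c₂ * ∫ v in (0:ℝ)..a₁ * u, |f (a₂ * v) - g (a₂ * v)|) :=
          abs_decay_sub_decay_le_integral hf hg hc₂.le hfb hgb hau
      _ ≤ exp (-(c₂ * b * (a₁ * u))) * (c₂ * ∫ _ in (0:ℝ)..a₁ * u, D) := by
          gcongr
          exact integral_mono_on hau (Continuous.intervalIntegrable (by fun_prop) _ _)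
            intervalIntegrable_const fun v _ => hfg _
      _ = _ := by rw [integral_const, smul_eq_mul]; ring_nf
  rw [← decay_max_zero, ← decay_max_zero c₁ a₁ (decay c₂ a₂ g)]
  calc _ ≤ exp (-(c₁ * 0 * max s 0)) *
        (c₁ * ∫ u in (0:ℝ)..max s 0, |decay c₂ a₂ f (a₁ * u) - decay c₂ a₂ g (a₁ * u)|) :=
        abs_decay_sub_decay_le_integral hF hG hc₁ (fun u => (decay_pos _ _ _ u).le)
          (fun u => (decay_pos _ _ _ u).le) (le_max_right s 0)
    _ ≤ c₁ * ∫ u in (0:ℝ)..max s 0, c₂ * a₁ * D * (u * exp (-(c₂ * b * a₁ * u))) := by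
        rw [mul_zero, zero_mul, neg_zero, exp_zero, one_mul]
        gcongr
        exact integral_mono_on (le_max_right s 0) (Continuous.intervalIntegrable (by fun_prop) _ _)
          (Continuous.intervalIntegrable (by fun_prop) _ _) hinner
    _ ≤ c₁ * (c₂ * a₁ * D * (1 / (c₂ * b * a₁) ^ 2)) := by
        rw [integral_const_mul]
        gcongr
        exact integral_mul_exp_neg_mul_le (by positivity) (le_max_right s 0)
    _ = _ := by field_simp

lemma decay_decay_mem_Icc {c₁ a₁ c₂ a₂ : ℝ} (hf : Continuous f) (hfb : ∀ u, b ≤ f u)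
    (hc₁ : 0 ≤ c₁) (ha₁ : 0 < a₁) (hc₂ : 0 < c₂) (hb : 0 < b)
    (hinv : b ≤ exp (-(c₁ / (c₂ * b * a₁)))) (s : ℝ) :
    decay c₁ a₁ (decay c₂ a₂ f) s ∈ Icc b 1 :=
  ⟨hinv.trans (exp_neg_le_decay (continuous_decay hf c₂ a₂) (mul_pos hc₂ hb) ha₁ hc₁
      (fun _ hu => decay_le_exp hf hfb hc₂.le a₂ hu) s),
    decay_le_one (fun u => (decay_pos _ _ _ u).le) hc₁ a₁ s⟩

open BoundedContinuousFunction in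
lemma exists_decay_decay_eq {c₁ a₁ c₂ a₂ : ℝ} (hc₁ : 0 ≤ c₁) (ha₁ : 0 < a₁) (hc₂ : 0 < c₂)
    (hb : 0 < b) (hinv : b ≤ exp (-(c₁ / (c₂ * b * a₁)))) (hK : c₁ / (c₂ * b ^ 2 * a₁) < 1) :
    ∃ g : ℝ → ℝ, Continuous g ∧ (∀ s, b ≤ g s) ∧ decay c₁ a₁ (decay c₂ a₂ g) = g := by
  set K : Set (ℝ →ᵇ ℝ) := {h | ∀ s, h s ∈ Icc b 1}
  have hKclosed : IsClosed K := by
    simp only [K, ofPred_forall]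
    exact isClosed_iInter fun s => isClosed_Icc.preimage (continuous_eval_const s)
  have : CompleteSpace K := hKclosed.completeSpace_coe
  have hb1 : b ≤ 1 := hinv.trans (exp_le_one_iff.2 (neg_nonpos.2 (by positivity)))
  have : Nonempty K := ⟨⟨const ℝ 1, fun _ => ⟨hb1, le_rfl⟩⟩⟩
  have hmem (h : K) := decay_decay_mem_Icc (a₂ := a₂) h.1.continuous (fun u => (h.2 u).1)
    hc₁ ha₁ hc₂ hb hinv
  let T : K → K := fun h =>
    ⟨ofNormedAddCommGroup _ (continuous_decay (continuous_decay h.1.continuous c₂ a₂) c₁ a₁) 1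
      fun s => by rw [norm_of_nonneg (decay_pos _ _ _ s).le]; exact (hmem h s).2, hmem h⟩
  have hKnn : 0 ≤ c₁ / (c₂ * b ^ 2 * a₁) := by positivity
  have hT : ContractingWith (Real.toNNReal (c₁ / (c₂ * b ^ 2 * a₁))) T := by
    refine ⟨by rwa [← NNReal.coe_lt_coe, Real.coe_toNNReal _ hKnn], ?_⟩
    refine LipschitzWith.of_dist_le_mul fun h h' => ?_
    rw [Real.coe_toNNReal _ hKnn, Subtype.dist_eq, Subtype.dist_eq,
      dist_le (mul_nonneg hKnn dist_nonneg)]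
    exact abs_decay_decay_sub_le h.1.continuous h'.1.continuous hc₁ ha₁ hc₂ hb
      (fun u => (h.2 u).1) (fun u => (h'.2 u).1) fun u => by
        rw [← Real.dist_eq]; exact dist_coe_le_dist u
  refine ⟨_, (hT.fixedPoint T).1.continuous, fun s => ((hT.fixedPoint T).2 s).1, ?_⟩
  exact congrArg (fun h : K => (h.1 : ℝ → ℝ)) hT.fixedPoint_isFixedPt

end decay

lemma hasDerivWithinAt_const_mul_comp_mul {g : ℝ → ℝ} {g' k t : ℝ}
    (hg : HasDerivWithinAt g g' (Ici 0) (k * t)) (hk : 0 ≤ k) (C : ℝ) :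
    HasDerivWithinAt (fun t => C * g (k * t)) (C * (g' * k)) (Ici 0) t := by
  have hlin : HasDerivWithinAt (fun t => k * t) k (Ici 0) t := by
    simpa using ((hasDerivAt_id t).const_mul k).hasDerivWithinAt
  exact (hg.comp t hlin fun u (hu : 0 ≤ u) => mul_nonneg hk hu).const_mul C

lemma eight_pow_mul_half_pow_succ (n : ℕ) : (8:ℝ) ^ n * (1 / 2) ^ (n + 1) = 4 ^ n / 2 := by
  rw [show (8:ℝ) = 4 * 2 by norm_num, mul_pow, pow_succ, one_div_pow]
  field_simp

noncomputable def selfSimilar (φ ψ : ℝ → ℝ) (n : ℕ) (t : ℝ) : ℝ :=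
  (1 / 2 : ℝ) ^ n * if Even n then ψ (4 ^ n / 8 * t) else φ (4 ^ n / 2 * t)

lemma selfSimilar_of_even {φ ψ : ℝ → ℝ} {n : ℕ} (hn : Even n) :
    selfSimilar φ ψ n = fun t => (1 / 2 : ℝ) ^ n * ψ (4 ^ n / 8 * t) := by
  funext t; simp [selfSimilar, hn]

lemma selfSimilar_of_odd {φ ψ : ℝ → ℝ} {n : ℕ} (hn : ¬Even n) :
    selfSimilar φ ψ n = fun t => (1 / 2 : ℝ) ^ n * φ (4 ^ n / 2 * t) := by
  funext t; simp [selfSimilar, hn]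

lemma selfSimilar_two_mul_ge {φ ψ : ℝ → ℝ} (hψ : ∀ s, 1 / 2 ≤ ψ s) (n : ℕ) (t : ℝ) :
    1 / 2 * (1 / 2) ^ (2 * n) ≤ selfSimilar φ ψ (2 * n) t := by
  rw [selfSimilar_of_even (even_two_mul n), mul_comm]
  exact mul_le_mul_of_nonneg_left (hψ _) (by positivity)

/-- Substituting the ansatz into system (m) leaves `φ' = -ψ φ` and `ψ'(s) = -4 φ(16 s) ψ(s)`
with `φ 0 = ψ 0 = 1`; these are the same equations in integrated form. -/
structure IsProfile (φ ψ : ℝ → ℝ) : Prop where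
  continuous_fst : Continuous φ
  continuous_snd : Continuous ψ
  fst_eq : φ = decay 1 1 ψ
  snd_eq : ψ = decay 4 16 φ

namespace IsProfile

variable {φ ψ : ℝ → ℝ} (h : IsProfile φ ψ)
include h

lemma hasDerivWithinAt_fst {s : ℝ} (hs : 0 ≤ s) :
    HasDerivWithinAt φ (-ψ s * φ s) (Ici 0) s := by
  have := hasDerivWithinAt_decay h.continuous_snd 1 1 hs
  rw [← h.fst_eq] at this
  simpa using this

lemma hasDerivWithinAt_snd {s : ℝ} (hs : 0 ≤ s) :
    HasDerivWithinAt ψ (-(4 * φ (16 * s)) * ψ s) (Ici 0) s := by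
  have := hasDerivWithinAt_decay h.continuous_fst 4 16 hs
  rwa [← h.snd_eq] at this

lemma hasDerivWithinAt_selfSimilar (n : ℕ) {t : ℝ} (ht : 0 ≤ t) :
    HasDerivWithinAt (selfSimilar φ ψ n)
      (-((8:ℝ) ^ n) * selfSimilar φ ψ n t * selfSimilar φ ψ (n + 1) t) (Ici 0) t := by
  have h8 := eight_pow_mul_half_pow_succ n
  by_cases hn : Even n
  · have hn1 : ¬Even (n + 1) := Nat.not_even_iff_odd.2 hn.add_one
    have harg : (4:ℝ) ^ (n + 1) / 2 * t = 16 * (4 ^ n / 8 * t) := by ring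
    rw [selfSimilar_of_even hn, selfSimilar_of_odd hn1]
    beta_reduce
    rw [harg]
    refine (hasDerivWithinAt_const_mul_comp_mul (h.hasDerivWithinAt_snd (by positivity))
      (by positivity) _).congr_deriv ?_
    linear_combination ((1 / 2) ^ n * ψ (4 ^ n / 8 * t) * φ (16 * (4 ^ n / 8 * t))) * h8
  · have hn1 : Even (n + 1) := (Nat.not_even_iff_odd.1 hn).add_one
    have harg : (4:ℝ) ^ (n + 1) / 8 * t = 4 ^ n / 2 * t := by ring
    rw [selfSimilar_of_odd hn, selfSimilar_of_even hn1]
    beta_reduce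
    rw [harg]
    refine (hasDerivWithinAt_const_mul_comp_mul (h.hasDerivWithinAt_fst (by positivity))
      (by positivity) _).congr_deriv ?_
    linear_combination ((1 / 2) ^ n * ψ (4 ^ n / 2 * t) * φ (4 ^ n / 2 * t)) * h8

lemma selfSimilar_pos (n : ℕ) (t : ℝ) : 0 < selfSimilar φ ψ n t := by
  rw [selfSimilar, h.fst_eq, h.snd_eq]
  split_ifs <;> exact mul_pos (by positivity) (decay_pos _ _ _ _)

lemma selfSimilar_zero (n : ℕ) : selfSimilar φ ψ n 0 = (1 / 2) ^ n := by
  rw [selfSimilar, h.fst_eq, h.snd_eq]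
  simp [decay_zero]

lemma selfSimilar_two_mul_le (hφ : ∀ s, 1 / 2 ≤ φ s) {n : ℕ} (hn : 1 ≤ n) {t : ℝ} (ht : 0 ≤ t) :
    selfSimilar φ ψ (2 * n) t ≤ (1 / 2) ^ (2 * n) * exp (-(4:ℝ) ^ (2 * n - 1) * t) := by
  have hs : 0 ≤ (4:ℝ) ^ (2 * n) / 8 * t := by positivity
  have hψ := decay_le_exp h.continuous_fst hφ (by norm_num : (0:ℝ) ≤ 4) 16 hs
  have h4 : (4:ℝ) ^ (2 * n) = 4 * 4 ^ (2 * n - 1) := by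
    rw [← pow_succ', Nat.sub_add_cancel (by omega)]
  rw [← h.snd_eq] at hψ
  rw [selfSimilar_of_even (even_two_mul n)]
  refine mul_le_mul_of_nonneg_left (hψ.trans_eq (congrArg exp ?_)) (by positivity)
  rw [h4]; ring

end IsProfile

lemma three_fifths_le_exp_neg : (3 / 5 : ℝ) ≤ exp (-(5 / 12)) :=
  le_trans (by norm_num) (one_sub_div_pow_le_exp_neg (n := 3) (t := 5 / 12) (by norm_num))

lemma exists_isProfile_snd_ge : ∃ φ ψ, IsProfile φ ψ ∧ ∀ s, 1 / 2 ≤ ψ s := by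
  obtain ⟨ψ, hψc, hψb, hψ⟩ := exists_decay_decay_eq (c₁ := 4) (a₁ := 16) (c₂ := 1) (a₂ := 1)
    (b := 3 / 5) (by norm_num) (by norm_num) (by norm_num) (by norm_num)
    (by convert three_fifths_le_exp_neg using 3; norm_num) (by norm_num)
  exact ⟨decay 1 1 ψ, ψ, ⟨continuous_decay hψc 1 1, hψc, rfl, hψ.symm⟩,
    fun s => le_trans (by norm_num) (hψb s)⟩

lemma exists_isProfile_fst_ge : ∃ φ ψ, IsProfile φ ψ ∧ ∀ s, 1 / 2 ≤ φ s := by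
  obtain ⟨φ, hφc, hφb, hφ⟩ := exists_decay_decay_eq (c₁ := 1) (a₁ := 1) (c₂ := 4) (a₂ := 16)
    (b := 3 / 5) (by norm_num) (by norm_num) (by norm_num) (by norm_num)
    (by convert three_fifths_le_exp_neg using 3; norm_num) (by norm_num)
  exact ⟨φ, decay 4 16 φ, ⟨hφc, continuous_decay hφc 4 16, hφ.symm, rfl⟩,
    fun s => le_trans (by norm_num) (hφb s)⟩

end SystemM

/-- system (m) with `λ_n = 8^n` and initial data `m_n(0) = 2^{-n}` has two
distinct nonnegative solutions `m⁺` and `m⁻` on `[0,∞)`, with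
`m⁺_{2n}(t) ≥ ½·2^{-2n}` and `m⁻_{2n}(t) ≤ 2^{-2n}·exp(−4^{2n−1} t)` for `n ≥ 1`, `t ≥ 0`. -/
theorem system_m_nonuniqueness :
    ∃ mp mm : ℕ → ℝ → ℝ,
      (∀ n : ℕ, 1 ≤ n → ∀ t : ℝ, 0 ≤ t →
        HasDerivWithinAt (mp n) (-((8:ℝ) ^ n) * mp n t * mp (n + 1) t)
          (Set.Ici (0:ℝ)) t) ∧
      (∀ n : ℕ, 1 ≤ n → ∀ t : ℝ, 0 ≤ t →
        HasDerivWithinAt (mm n) (-((8:ℝ) ^ n) * mm n t * mm (n + 1) t)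
          (Set.Ici (0:ℝ)) t) ∧
      (∀ n : ℕ, 1 ≤ n → ∀ t : ℝ, 0 ≤ t → 0 ≤ mp n t ∧ 0 ≤ mm n t) ∧
      (∀ n : ℕ, 1 ≤ n → mp n 0 = (1/2 : ℝ) ^ n ∧ mm n 0 = (1/2 : ℝ) ^ n) ∧
      (∀ n : ℕ, 1 ≤ n → ∀ t : ℝ, 0 ≤ t →
        (1/2 : ℝ) * (1/2 : ℝ) ^ (2 * n) ≤ mp (2 * n) t ∧
        mm (2 * n) t ≤ (1/2 : ℝ) ^ (2 * n) * Real.exp (-(4:ℝ) ^ (2 * n - 1) * t)) ∧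
      (∃ n : ℕ, 1 ≤ n ∧ ∃ t : ℝ, 0 ≤ t ∧ mp n t ≠ mm n t) := by
  obtain ⟨φp, ψp, hp, hψp⟩ := SystemM.exists_isProfile_snd_ge
  obtain ⟨φm, ψm, hm, hφm⟩ := SystemM.exists_isProfile_fst_ge
  have hbounds (n : ℕ) (hn : 1 ≤ n) (t : ℝ) (ht : 0 ≤ t) :=
    And.intro (SystemM.selfSimilar_two_mul_ge (φ := φp) hψp n t)
      (hm.selfSimilar_two_mul_le hφm hn ht)
  refine ⟨SystemM.selfSimilar φp ψp, SystemM.selfSimilar φm ψm,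
    fun n _ t ht => hp.hasDerivWithinAt_selfSimilar n ht,
    fun n _ t ht => hm.hasDerivWithinAt_selfSimilar n ht,
    fun n _ t _ => ⟨(hp.selfSimilar_pos n t).le, (hm.selfSimilar_pos n t).le⟩,
    fun n _ => ⟨hp.selfSimilar_zero n, hm.selfSimilar_zero n⟩, hbounds,
    2, by norm_num, 1, zero_le_one, ?_⟩
  -- at `n = 1, t = 1` the bounds read `m⁺₂(1) ≥ 1/8 > e⁻⁴/4 ≥ m⁻₂(1)`
  obtain ⟨hge, hle⟩ := hbounds 1 le_rfl 1 zero_le_one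
  have hexp : exp (-4) < 1 / 2 := (exp_le_exp.2 (by norm_num)).trans_lt exp_neg_one_lt_half
  norm_num at hge hle
  exact (hle.trans_lt (by linarith)).trans_le hge |>.ne'
end
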